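/- The improper integral ∫₀¹ dx/√(1 − x³) converges and equals Γ(1/3)³ / (2^{4/3}·3^{1/2}·π), where Γ is the real Gamma function. -/

import Mathlib

/-!
Substituting `u = x ^ 3` turns the integral into `B(1/3, 1/2) / 3`, and Legendre's duplication
formula gives `B(s, 1/2) = 2 ^ (2s - 1) B(s, s)`, so the value is
`2 ^ (-1/3) Γ(1/3)² / (3 Γ(2/3))`. The reflection formula `Γ(1/3) Γ(2/3) = π / sin (π/3)`
then eliminates `Γ(2/3)`.
-/

open MeasureTheory Real Set

section BetaIntegral

lemma ofReal_rpow_mul_one_sub_rpow (a b : ℝ) {u : ℝ} (hu : u ∈ Icc (0 : ℝ) 1) :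
    ((u ^ (a - 1) * (1 - u) ^ (b - 1) : ℝ) : ℂ)
      = (u : ℂ) ^ ((a : ℂ) - 1) * (1 - (u : ℂ)) ^ ((b : ℂ) - 1) := by
  push_cast [Complex.ofReal_cpow hu.1, Complex.ofReal_cpow (sub_nonneg.2 hu.2)]
  rfl

variable {a b : ℝ}

lemma integrableOn_rpow_mul_one_sub_rpow (ha : 0 < a) (hb : 0 < b) :
    IntegrableOn (fun u : ℝ => u ^ (a - 1) * (1 - u) ^ (b - 1)) (Ioo 0 1) := by
  have h := (intervalIntegrable_iff_integrableOn_Ioc_of_le zero_le_one).mp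
    (Complex.betaIntegral_convergent (u := a) (v := b) (by simpa) (by simpa))
  refine IntegrableOn.congr_fun (h.mono_set Ioo_subset_Ioc_self).re (fun u hu => ?_)
    measurableSet_Ioo
  simp [← ofReal_rpow_mul_one_sub_rpow a b (Ioo_subset_Icc_self hu)]

lemma integral_rpow_mul_one_sub_rpow (ha : 0 < a) (hb : 0 < b) :
    ∫ u in Ioo (0 : ℝ) 1, u ^ (a - 1) * (1 - u) ^ (b - 1)
      = Gamma a * Gamma b / Gamma (a + b) := by
  have h := Complex.betaIntegral_eq_Gamma_mul_div a b (by simpa) (by simpa)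
  rw [Complex.betaIntegral, intervalIntegral.integral_of_le zero_le_one,
    integral_Ioc_eq_integral_Ioo,
    ← setIntegral_congr_fun measurableSet_Ioo
      (fun u hu => ofReal_rpow_mul_one_sub_rpow a b (Ioo_subset_Icc_self hu)),
    integral_complex_ofReal, ← Complex.ofReal_add, Complex.Gamma_ofReal,
    Complex.Gamma_ofReal, Complex.Gamma_ofReal] at h
  exact_mod_cast h

end BetaIntegral

section RpowSubstitution

variable {E : Type*} [NormedAddCommGroup E] [NormedSpace ℝ E] {p : ℝ}

lemma image_rpow_Ioo_zero_one (hp : 0 < p) : (· ^ p) '' Ioo (0 : ℝ) 1 = Ioo 0 1 := by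
  ext y
  constructor
  · rintro ⟨x, ⟨hx0, hx1⟩, rfl⟩
    exact ⟨rpow_pos_of_pos hx0 p, rpow_lt_one hx0.le hx1 hp⟩
  · rintro ⟨hy0, hy1⟩
    refine ⟨y ^ p⁻¹, ⟨rpow_pos_of_pos hy0 _, rpow_lt_one hy0.le hy1 (inv_pos.2 hp)⟩, ?_⟩
    simp [← rpow_mul hy0.le, hp.ne']

lemma hasDerivWithinAt_rpow_Ioo_zero_one {x : ℝ} (hx : x ∈ Ioo (0 : ℝ) 1) :
    HasDerivWithinAt (· ^ p) (p * x ^ (p - 1)) (Ioo 0 1) x :=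
  (hasDerivAt_rpow_const (Or.inl hx.1.ne')).hasDerivWithinAt

lemma injOn_rpow_Ioo_zero_one (hp : 0 < p) : InjOn (· ^ p) (Ioo (0 : ℝ) 1) :=
  (rpow_left_injOn hp.ne').mono fun _ hx => hx.1.le

lemma abs_mul_rpow_sub_one (hp : 0 ≤ p) {x : ℝ} (hx : 0 ≤ x) :
    |p * x ^ (p - 1)| = p * x ^ (p - 1) :=
  abs_of_nonneg (by positivity)

lemma integrableOn_Ioo_zero_one_comp_rpow_iff (g : ℝ → E) (hp : 0 < p) :
    IntegrableOn (fun x => (p * x ^ (p - 1)) • g (x ^ p)) (Ioo 0 1) ↔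
      IntegrableOn g (Ioo 0 1) := by
  have h := integrableOn_image_iff_integrableOn_abs_deriv_smul measurableSet_Ioo
    (fun _ => hasDerivWithinAt_rpow_Ioo_zero_one) (injOn_rpow_Ioo_zero_one hp) g
  rw [image_rpow_Ioo_zero_one hp] at h
  rw [h]
  exact integrableOn_congr_fun (fun x hx => by rw [abs_mul_rpow_sub_one hp.le hx.1.le])
    measurableSet_Ioo

lemma integral_comp_rpow_Ioo_zero_one (g : ℝ → E) (hp : 0 < p) :
    ∫ x in Ioo 0 1, (p * x ^ (p - 1)) • g (x ^ p) = ∫ y in Ioo 0 1, g y := by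
  have h := integral_image_eq_integral_abs_deriv_smul measurableSet_Ioo
    (fun _ => hasDerivWithinAt_rpow_Ioo_zero_one) (injOn_rpow_Ioo_zero_one hp) g
  rw [image_rpow_Ioo_zero_one hp] at h
  rw [h]
  exact setIntegral_congr_fun measurableSet_Ioo
    (fun x hx => by rw [abs_mul_rpow_sub_one hp.le hx.1.le])

end RpowSubstitution

section OneSubRpow

variable {p b : ℝ}

lemma rpow_sub_one_mul_rpow_rpow_inv_sub_one (hp : p ≠ 0) {x : ℝ} (hx : 0 < x) :
    x ^ (p - 1) * (x ^ p) ^ (p⁻¹ - 1) = 1 := by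
  rw [← rpow_mul hx.le, mul_sub, mul_inv_cancel₀ hp, mul_one, ← rpow_add hx]
  simp

-- The Jacobian of `x ↦ x ^ p` cancels the Beta weight `u ^ (p⁻¹ - 1)` at `u = x ^ p`.
lemma mul_rpow_sub_one_smul_inv_mul (hp : p ≠ 0) {x : ℝ} (hx : 0 < x) (y : ℝ) :
    (p * x ^ (p - 1)) • (p⁻¹ * ((x ^ p) ^ (p⁻¹ - 1) * y)) = y := by
  rw [smul_eq_mul]
  linear_combination y * mul_inv_cancel₀ hp
    + p * p⁻¹ * y * rpow_sub_one_mul_rpow_rpow_inv_sub_one hp hx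

lemma integrableOn_one_sub_rpow_rpow (hp : 0 < p) (hb : 0 < b) :
    IntegrableOn (fun x : ℝ => (1 - x ^ p) ^ (b - 1)) (Ioo 0 1) := by
  have h := (integrableOn_Ioo_zero_one_comp_rpow_iff _ hp).mpr
    ((integrableOn_rpow_mul_one_sub_rpow (inv_pos.2 hp) hb).const_mul p⁻¹)
  exact h.congr_fun (fun x hx => mul_rpow_sub_one_smul_inv_mul hp.ne' hx.1 _) measurableSet_Ioo

lemma integral_one_sub_rpow_rpow (hp : 0 < p) (hb : 0 < b) :
    ∫ x in Ioo (0 : ℝ) 1, (1 - x ^ p) ^ (b - 1)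
      = Gamma p⁻¹ * Gamma b / (p * Gamma (p⁻¹ + b)) := by
  have h := integral_comp_rpow_Ioo_zero_one
    (fun u => p⁻¹ * (u ^ (p⁻¹ - 1) * (1 - u) ^ (b - 1))) hp
  rw [integral_const_mul, integral_rpow_mul_one_sub_rpow (inv_pos.2 hp) hb,
    setIntegral_congr_fun measurableSet_Ioo
      fun x hx => mul_rpow_sub_one_smul_inv_mul hp.ne' hx.1 _] at h
  rw [h]
  field_simp

end OneSubRpow

lemma Gamma_mul_Gamma_one_half_div_Gamma_add_half {s : ℝ} (hs : 0 < s) :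
    Gamma s * Gamma (1 / 2) / Gamma (s + 1 / 2)
      = 2 ^ (2 * s - 1) * Gamma s ^ 2 / Gamma (2 * s) := by
  have hdup := Gamma_mul_Gamma_add_half_of_pos hs
  have hpow : (2 : ℝ) ^ (2 * s - 1) * 2 ^ (1 - 2 * s) = 1 := by
    rw [← rpow_add two_pos]; simp
  rw [Gamma_one_half_eq, div_eq_div_iff (by positivity) (by positivity)]
  linear_combination (-(2 : ℝ) ^ (2 * s - 1) * Gamma s) * hdup
    - (Gamma (2 * s) * Gamma s * √π) * hpow

lemma Gamma_one_third_mul_Gamma_two_thirds : Gamma (1 / 3) * Gamma (2 / 3) = 2 * π / √3 := by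
  have h := Gamma_mul_Gamma_one_sub (1 / 3)
  rw [show π * (1 / 3) = π / 3 by ring, sin_pi_div_three] at h
  rw [show (2 / 3 : ℝ) = 1 - 1 / 3 by norm_num, h]
  field_simp

lemma Gamma_inv_three_mul_Gamma_one_half_div :
    Gamma 3⁻¹ * Gamma (1 / 2) / (3 * Gamma (3⁻¹ + 1 / 2))
      = Gamma (1 / 3) ^ 3 / ((2 : ℝ) ^ ((4 : ℝ) / 3) * (3 : ℝ) ^ ((1 : ℝ) / 2) * π) := by
  have h43 : (2 : ℝ) ^ ((4 : ℝ) / 3) * 2 ^ (2 * (1 / 3 : ℝ) - 1) = 2 := by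
    rw [← rpow_add two_pos]; norm_num
  have h4 : (0 : ℝ) < 2 ^ ((4 : ℝ) / 3) := by positivity
  have h3 : √3 * √3 = 3 := mul_self_sqrt (by norm_num)
  have h23 : Gamma (1 / 3) * Gamma (2 / 3) * √3 = 2 * π := by
    rw [Gamma_one_third_mul_Gamma_two_thirds]; field_simp
  rw [← one_div, mul_comm 3, ← div_div,
    Gamma_mul_Gamma_one_half_div_Gamma_add_half (by norm_num),
    show Gamma (2 * (1 / 3)) = Gamma (2 / 3) by norm_num, ← sqrt_eq_rpow]
  generalize (2 : ℝ) ^ ((4 : ℝ) / 3) = B at h43 h4 ⊢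
  generalize (2 : ℝ) ^ (2 * (1 / 3 : ℝ) - 1) = A at h43 ⊢
  rw [div_div, div_eq_div_iff (by positivity) (by positivity)]
  linear_combination Gamma (1 / 3) ^ 2 * √3 * π * h43 - √3 * Gamma (1 / 3) ^ 2 * h23
    + Gamma (1 / 3) ^ 3 * Gamma (2 / 3) * h3

lemma one_div_sqrt_eq_rpow_one_half_sub_one {y : ℝ} (hy : 0 ≤ y) :
    1 / √y = y ^ ((1 / 2 : ℝ) - 1) := by
  rw [show (1 / 2 : ℝ) - 1 = -(1 / 2) by norm_num, rpow_neg hy, ← sqrt_eq_rpow, one_div]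

/-- `∫₀¹ dx/√(1 - x³) = Γ(1/3)³ / (2^{4/3} 3^{1/2} π)`. -/
theorem integral_one_div_sqrt_one_sub_x_cube :
    IntegrableOn (fun x : ℝ => 1 / Real.sqrt (1 - x ^ 3)) (Set.Ioo 0 1) ∧
    ∫ x in Set.Ioo (0 : ℝ) 1, 1 / Real.sqrt (1 - x ^ 3)
      = Real.Gamma (1 / 3) ^ 3 / ((2 : ℝ) ^ ((4 : ℝ) / 3) * (3 : ℝ) ^ ((1 : ℝ) / 2) * Real.pi) := by
  have hp : (0 : ℝ) < 3 := three_pos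
  have hb : (0 : ℝ) < 1 / 2 := one_half_pos
  have hcongr : EqOn (fun x : ℝ => (1 - x ^ (3 : ℝ)) ^ ((1 / 2 : ℝ) - 1))
      (fun x => 1 / √(1 - x ^ 3)) (Ioo 0 1) := fun x hx => by
    dsimp only
    rw [rpow_ofNat, one_div_sqrt_eq_rpow_one_half_sub_one
      (sub_nonneg.2 (pow_le_one₀ hx.1.le hx.2.le))]
  refine ⟨(integrableOn_one_sub_rpow_rpow hp hb).congr_fun hcongr measurableSet_Ioo, ?_⟩
  rw [← setIntegral_congr_fun measurableSet_Ioo hcongr, integral_one_sub_rpow_rpow hp hb,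
    Gamma_inv_three_mul_Gamma_one_half_div]
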